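/- Let P be a simple polygon in ℝ² with vertex set V, and suppose u and w are two consecutive extreme points of the convex hull of V (i.e., the open arc of the hull boundary between u and w contains no point of V). If the segment uw is either an edge of P or an internal diagonal of P, then uw is an edge of P. -/

import Mathlib

open Set

/-- Points in the plane. -/
abbrev Pt := ℝ × ℝ

/-- Orientation (twice signed area) of a triple of points. -/
noncomputable def orient (a b c : Pt) : ℝ :=
  (b.1 - a.1) * (c.2 - a.2) - (b.2 - a.2) * (c.1 - a.1)

/-- A simple polygon: a cyclic sequence of at least three distinct vertices whose
consecutive-vertex edges meet only as forced (adjacent edges share exactly their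
common vertex, non-adjacent edges are disjoint). -/
structure SimplePolygon where
  n : ℕ
  three_le : 3 ≤ n
  verts : ZMod n → Pt
  inj : Function.Injective verts
  edges_nonadj : ∀ i j : ZMod n, j ≠ i → j ≠ i + 1 → i ≠ j + 1 →
    segment ℝ (verts i) (verts (i + 1)) ∩ segment ℝ (verts j) (verts (j + 1)) = ∅
  edges_adj : ∀ i : ZMod n,
    segment ℝ (verts i) (verts (i + 1)) ∩ segment ℝ (verts (i + 1)) (verts (i + 1 + 1))
      = {verts (i + 1)}

/-- The boundary curve of a simple polygon. -/
def SimplePolygon.boundary (P : SimplePolygon) : Set Pt :=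
  ⋃ i : ZMod P.n, segment ℝ (P.verts i) (P.verts (i + 1))

/-- The interior region of a simple polygon: points off the boundary whose connected
component in the complement of the boundary is bounded. -/
def SimplePolygon.interiorRegion (P : SimplePolygon) : Set Pt :=
  {x | x ∉ P.boundary ∧ Bornology.IsBounded (connectedComponentIn P.boundaryᶜ x)}

/-- The exterior region of a simple polygon: points off the boundary whose connected
component in the complement of the boundary is unbounded. -/
def SimplePolygon.exteriorRegion (P : SimplePolygon) : Set Pt :=
  {x | x ∉ P.boundary ∧ ¬ Bornology.IsBounded (connectedComponentIn P.boundaryᶜ x)}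

/-- `v` is a vertex of the polygon `P`. -/
def SimplePolygon.IsVertex (P : SimplePolygon) (v : Pt) : Prop := v ∈ Set.range P.verts

/-- The (unordered) pair `u v` forms an edge of `P`. -/
def SimplePolygon.IsEdgeOf (P : SimplePolygon) (u v : Pt) : Prop :=
  ∃ i : ZMod P.n, (u = P.verts i ∧ v = P.verts (i + 1)) ∨ (v = P.verts i ∧ u = P.verts (i + 1))

/-- The segment `uv` is an internal diagonal of `P`: a segment joining two
non-adjacent vertices whose relative interior lies in the interior of `P`. -/
def SimplePolygon.IsInternalDiagonal (P : SimplePolygon) (u v : Pt) : Prop :=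
  P.IsVertex u ∧ P.IsVertex v ∧ u ≠ v ∧ ¬ P.IsEdgeOf u v ∧
    openSegment ℝ u v ⊆ P.interiorRegion

/-- The set `V(S)` of endpoints of a family of segments, each given by its pair of
endpoints. -/
def endpointSet (S : Finset (Pt × Pt)) : Set Pt :=
  {p | ∃ s ∈ S, p = s.1 ∨ p = s.2}

/-- `P` is a circumscribing polygon of `S`: the vertex set of `P` is `V(S)` and every
segment of `S` is an edge or an internal diagonal of `P`. -/
def Circumscribes (P : SimplePolygon) (S : Finset (Pt × Pt)) : Prop :=
  Set.range P.verts = endpointSet S ∧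
  ∀ s ∈ S, P.IsEdgeOf s.1 s.2 ∨ P.IsInternalDiagonal s.1 s.2

/-- The segments of `S` are nondegenerate and pairwise disjoint. -/
def PairwiseDisjointSegs (S : Finset (Pt × Pt)) : Prop :=
  (∀ s ∈ S, s.1 ≠ s.2) ∧
  ∀ s ∈ S, ∀ t ∈ S, s ≠ t →
    Disjoint (segment ℝ s.1 s.2) (segment ℝ t.1 t.2)

/-- All `2|S|` endpoints of the segments of `S` are distinct. -/
def DistinctEndpoints (S : Finset (Pt × Pt)) : Prop :=
  ∀ s ∈ S, ∀ t ∈ S, s.1 ≠ t.2 ∧ (s ≠ t → s.1 ≠ t.1 ∧ s.2 ≠ t.2)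


/-! The open segment of an internal diagonal lies in a bounded component of the complement of the
boundary. A point on the frontier of the convex hull of the vertices, however, can be joined off
the boundary to a point outside the hull, and from there a ray leaves to infinity without meeting
the hull, which contains the boundary. Hence `uw` cannot be an internal diagonal. -/

open Bornology

theorem Convex.add_smul_sub_notMem {𝕜 E : Type*} [Field 𝕜] [LinearOrder 𝕜] [IsStrictOrderedRing 𝕜]
    [AddCommGroup E] [Module 𝕜 E] {s : Set E} (hs : Convex 𝕜 s) {y z : E} (hz : z ∈ s)
    (hy : y ∉ s) {t : 𝕜} (ht : 0 ≤ t) : y + t • (y - z) ∉ s := by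
  intro hp
  refine hy ?_
  have h1t : 1 + t ≠ 0 := by positivity
  -- `y` lies on the segment from `z` to `y + t • (y - z)`
  have := hs.add_smul_sub_mem hz hp (t := (1 + t)⁻¹)
    ⟨by positivity, inv_le_one_of_one_le₀ (by linarith)⟩
  convert this using 1
  rw [show y + t • (y - z) - z = (1 + t) • (y - z) by module, smul_smul, inv_mul_cancel₀ h1t,
    one_smul, add_sub_cancel]

section NormedSpace

variable {E : Type*} [NormedAddCommGroup E] [NormedSpace ℝ E]

theorem not_isBounded_image_add_smul_Ici (y : E) {d : E} (hd : d ≠ 0) :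
    ¬ IsBounded ((fun t : ℝ => y + t • d) '' Ici 0) := by
  rw [Metric.isBounded_iff_subset_closedBall y]
  rintro ⟨R, hR⟩
  have hd' : 0 < ‖d‖ := norm_pos_iff.2 hd
  set t := (|R| + 1) / ‖d‖
  have ht : 0 ≤ t := by positivity
  have hmem := hR ⟨t, ht, rfl⟩
  rw [Metric.mem_closedBall, dist_eq_norm, add_sub_cancel_left, norm_smul, Real.norm_of_nonneg ht,
    div_mul_cancel₀ _ hd'.ne'] at hmem
  linarith [le_abs_self R]

theorem not_isBounded_connectedComponentIn_compl_of_mem_frontier {B H : Set E}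
    (hH : Convex ℝ H) (hBH : B ⊆ H) (hB : IsClosed B) {x : E} (hxB : x ∉ B) (hx : x ∈ frontier H) :
    ¬ IsBounded (connectedComponentIn Bᶜ x) := by
  rw [frontier_eq_closure_inter_closure] at hx
  obtain ⟨r, hr, hball⟩ := Metric.isOpen_iff.1 hB.isOpen_compl x hxB
  obtain ⟨y, hyH, hxy⟩ := Metric.mem_closure_iff.1 hx.2 r hr
  obtain ⟨z, hz⟩ := closure_nonempty_iff.1 ⟨x, hx.1⟩
  set ray := (fun t : ℝ => y + t • (y - z)) '' Ici 0
  have hseg : segment ℝ x y ⊆ Bᶜ :=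
    ((convex_ball x r).segment_subset (Metric.mem_ball_self hr) (Metric.mem_ball'.2 hxy)).trans
      hball
  have hray : ray ⊆ Bᶜ := by
    rintro _ ⟨t, ht, rfl⟩ hB
    exact hH.add_smul_sub_notMem hz hyH ht (hBH hB)
  have hyx : connectedComponentIn Bᶜ y = connectedComponentIn Bᶜ x :=
    (connectedComponentIn_eq ((convex_segment x y).isPreconnected.subset_connectedComponentIn
      (left_mem_segment ℝ x y) hseg (right_mem_segment ℝ x y))).symm
  have hray_comp : ray ⊆ connectedComponentIn Bᶜ x := hyx ▸
    (isPreconnected_Ici.image _ (by fun_prop)).subset_connectedComponentIn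
      ⟨0, self_mem_Ici, by simp⟩ hray
  have hyz : y - z ≠ 0 := sub_ne_zero.2 (ne_of_mem_of_not_mem hz hyH).symm
  exact fun hbdd => not_isBounded_image_add_smul_Ici y hyz (hbdd.subset hray_comp)

end NormedSpace

namespace SimplePolygon

theorem isCompact_boundary (P : SimplePolygon) : IsCompact P.boundary := by
  have : NeZero P.n := ⟨by have := P.three_le; omega⟩
  refine isCompact_iUnion fun i => ?_
  rw [← convexHull_pair (𝕜 := ℝ)]
  exact (toFinite _).isCompact_convexHull ℝ

theorem boundary_subset_convexHull (P : SimplePolygon) :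
    P.boundary ⊆ convexHull ℝ (range P.verts) :=
  iUnion_subset fun i => (convex_convexHull ℝ _).segment_subset
    (subset_convexHull ℝ _ (mem_range_self i)) (subset_convexHull ℝ _ (mem_range_self (i + 1)))

theorem disjoint_interiorRegion_frontier_convexHull (P : SimplePolygon) :
    Disjoint P.interiorRegion (frontier (convexHull ℝ (range P.verts))) :=
  disjoint_left.2 fun _ hx hfr =>
    not_isBounded_connectedComponentIn_compl_of_mem_frontier (convex_convexHull ℝ _)
      P.boundary_subset_convexHull P.isCompact_boundary.isClosed hx.1 hfr hx.2

end SimplePolygon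

theorem consecutive_hull_vertices_edge_general (P : SimplePolygon) (u w : Pt)
    (V : Set Pt) (hV : V = Set.range P.verts)
    (harc : segment ℝ u w ⊆ frontier (convexHull ℝ V))
    (h : P.IsEdgeOf u w ∨ P.IsInternalDiagonal u w) :
    P.IsEdgeOf u w := by
  rcases h with hedge | ⟨-, -, -, -, hdiag⟩
  · exact hedge
  subst hV
  have hmid := midpoint_mem_openSegment (𝕜 := ℝ) u w
  exact absurd (harc (openSegment_subset_segment ℝ u w hmid))
    (disjoint_left.1 P.disjoint_interiorRegion_frontier_convexHull (hdiag hmid))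

/-- If `u` and `w` are consecutive extreme points of the convex hull of the vertex set
of a simple polygon `P` (the open hull arc between them, i.e. the open segment `uw`
lying on the hull boundary, contains no vertex), and `uw` is an edge or an internal
diagonal of `P`, then `uw` is an edge of `P`. -/
theorem consecutive_hull_vertices_edge (P : SimplePolygon) (u w : Pt)
    (V : Set Pt) (hV : V = Set.range P.verts)
    (hu : u ∈ Set.extremePoints ℝ (convexHull ℝ V))
    (hw : w ∈ Set.extremePoints ℝ (convexHull ℝ V))
    (huw : u ≠ w)
    (harc : segment ℝ u w ⊆ frontier (convexHull ℝ V))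
    (hempty : ∀ v ∈ V, v ∉ openSegment ℝ u w)
    (h : P.IsEdgeOf u w ∨ P.IsInternalDiagonal u w) :
    P.IsEdgeOf u w :=
  consecutive_hull_vertices_edge_general P u w V hV harc h
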